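/- Counterexample showing the summability condition is not necessary: let X = {−1, 1}, π the uniform distribution, P₀(x, ·) = π, P₁(x, ·) = δ_{−x}, and Q₀ = Q₁ = P₁. Then for the identity function f, the alternating chains (P₁, Q₁) and (P₀, Q₀) started at π satisfy v₁(f) ≤ v₀(f), but the series Σₖ≥₁ |Cov(f(X₀⁽¹⁾), f(Xₖ⁽¹⁾))| diverges. -/

import Mathlib

open MeasureTheory Filter
open scoped ENNReal Topology

/-- `opSeqF P Q i m f x = E[f(X_{i+m}) ∣ X_i = x]` for the inhomogeneous chain using the
(plain-function) kernel `P` out of even times and `Q` out of odd times. -/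
noncomputable def opSeqF {X : Type*} [MeasurableSpace X] (P Q : X → Measure X) :
    ℕ → ℕ → (X → ℝ) → X → ℝ
  | _, 0, f => f
  | i, m + 1, f => fun x => ∫ y, opSeqF P Q (i + 1) m f y ∂((if Even i then P else Q) x)

/-- `covF π P Q f i m = Cov(f(X_i), f(X_{i+m}))` for the alternating chain started in
stationarity `X₀ ∼ π`. -/
noncomputable def covF {X : Type*} [MeasurableSpace X] (π : Measure X) (P Q : X → Measure X)
    (f : X → ℝ) (i m : ℕ) : ℝ :=
  (∫ x, f x * opSeqF P Q i m f x ∂π) - (∫ x, f x ∂π) ^ 2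

/-- `varF π P Q f n = Var(∑_{k=0}^{n-1} f(X_k))` for the alternating chain started in
stationarity. -/
noncomputable def varF {X : Type*} [MeasurableSpace X] (π : Measure X) (P Q : X → Measure X)
    (f : X → ℝ) (n : ℕ) : ℝ :=
  ∑ i ∈ Finset.range n, ∑ j ∈ Finset.range n,
    covF π P Q f (min i j) (max i j - min i j)

/-- The uniform distribution on `{-1, 1} ⊆ ℤ`. -/
noncomputable def pi7 : Measure ℤ := (2 : ℝ≥0∞)⁻¹ • (Measure.dirac 1 + Measure.dirac (-1))

/-- The "resampling" kernel `P₀(x, ·) = π`. -/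
noncomputable def P0k : ℤ → Measure ℤ := fun _ => pi7

/-- The "flip" kernel `P₁(x, ·) = δ_{-x}`; also `Q₀ = Q₁ = P₁`. -/
noncomputable def P1k : ℤ → Measure ℤ := fun x => Measure.dirac (-x)

/-! In the flip chain `X_k = (-1)^k X₀`, so the autocovariances are `(-1)^k` and not summable,
while the partial sums `∑_{k<n} X_k` are `0` or `X₀` and have bounded variance. In the chain
alternating resampling and flipping, `X_{2k} = -X_{2k-1}`, so the partial sums collapse to
`X₀` plus possibly one last term, with variance `1` or `2`. Hence both asymptotic variances
vanish. -/

section General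

variable {X : Type*} [MeasurableSpace X] (π : Measure X) (P Q : X → Measure X) (f : X → ℝ)

lemma varF_succ (n : ℕ) :
    varF π P Q f (n + 1) =
      varF π P Q f n + 2 * ∑ i ∈ Finset.range n, covF π P Q f i (n - i) +
        covF π P Q f n 0 := by
  have hrow : ∀ i ∈ Finset.range n,
      covF π P Q f (min i n) (max i n - min i n) = covF π P Q f i (n - i) := fun i hi => by
    rw [min_eq_left (Finset.mem_range.mp hi).le, max_eq_right (Finset.mem_range.mp hi).le]
  have hcol : ∀ j ∈ Finset.range n,
      covF π P Q f (min n j) (max n j - min n j) = covF π P Q f j (n - j) := fun j hj => by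
    rw [min_eq_right (Finset.mem_range.mp hj).le, max_eq_left (Finset.mem_range.mp hj).le]
  simp only [varF, Finset.sum_range_succ, Finset.sum_add_distrib, Finset.sum_congr rfl hrow,
    Finset.sum_congr rfl hcol, min_self, max_self, Nat.sub_self]
  ring

end General

lemma tendsto_div_natCast_nhds_zero_of_abs_le {u : ℕ → ℝ} {C : ℝ} (h : ∀ n, |u n| ≤ C) :
    Tendsto (fun n => u n / n) atTop (𝓝 0) :=
  squeeze_zero_norm (fun n => by
    rw [Real.norm_eq_abs, abs_div, Nat.abs_cast]
    exact div_le_div_of_nonneg_right (h n) n.cast_nonneg)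
    (tendsto_const_div_atTop_nhds_zero_nat C)

lemma neg_one_pow_max_sub_min (a b : ℕ) :
    (-1 : ℝ) ^ (max a b - min a b) = (-1) ^ a * (-1) ^ b := by
  have h : a + b = (max a b - min a b) + 2 * min a b := by omega
  rw [← pow_add, h, pow_add, pow_mul, neg_one_sq, one_pow, mul_one]

lemma integral_pi7 (g : ℤ → ℝ) : ∫ x, g x ∂pi7 = (g 1 + g (-1)) / 2 := by
  rw [pi7, integral_smul_measure, integral_add_measure (integrable_dirac enorm_lt_top)
    (integrable_dirac enorm_lt_top), integral_dirac, integral_dirac]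
  simp [ENNReal.toReal_inv]
  ring

lemma opSeqF_flip (i m : ℕ) :
    opSeqF P1k P1k i m (fun x : ℤ => (x : ℝ)) = fun x : ℤ => (-1) ^ m * (x : ℝ) := by
  induction m generalizing i with
  | zero => funext x; simp [opSeqF]
  | succ m ih =>
    funext x
    simp only [opSeqF, ite_self, P1k, ih, integral_dirac]
    push_cast
    ring

lemma covF_flip (i m : ℕ) : covF pi7 P1k P1k (fun x : ℤ => (x : ℝ)) i m = (-1) ^ m := by
  rw [covF, opSeqF_flip, integral_pi7, integral_pi7]
  push_cast
  ring

lemma varF_flip (n : ℕ) :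
    varF pi7 P1k P1k (fun x : ℤ => (x : ℝ)) n = ((1 - (-1) ^ n) / 2) ^ 2 := by
  have hsum : ∑ i ∈ Finset.range n, (-1 : ℝ) ^ i = (1 - (-1) ^ n) / 2 := by
    rw [geom_sum_eq (by norm_num)]
    ring
  simp only [varF, covF_flip, neg_one_pow_max_sub_min, ← hsum, sq, Finset.sum_mul_sum]

lemma abs_varF_flip_le (n : ℕ) : |varF pi7 P1k P1k (fun x : ℤ => (x : ℝ)) n| ≤ 1 := by
  rcases neg_one_pow_eq_or ℝ n with h | h <;> norm_num [varF_flip, h]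

lemma opSeqF_resample_flip (i m : ℕ) :
    opSeqF P0k P1k i m (fun x : ℤ => (x : ℝ)) =
      if m = 0 then (fun x : ℤ => (x : ℝ))
      else if m = 1 ∧ Odd i then (fun x : ℤ => -(x : ℝ)) else 0 := by
  induction m generalizing i with
  | zero => simp [opSeqF]
  | succ m ih =>
    funext x
    rcases Nat.even_or_odd i with hi | hi
    · have hi' : ¬Odd i := Nat.not_odd_iff_even.mpr hi
      simp only [opSeqF, if_pos hi, P0k, integral_pi7, ih, if_neg m.succ_ne_zero, hi', and_false,
        if_false, Pi.zero_apply]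
      split_ifs <;> norm_num
    · have hi' : ¬Odd (i + 1) := Nat.not_odd_iff_even.mpr hi.add_one
      simp only [opSeqF, if_neg (Nat.not_even_iff_odd.mpr hi), P1k, integral_dirac, ih, hi',
        and_false, if_false, if_neg m.succ_ne_zero, hi, and_true, Nat.add_eq_right]
      split_ifs <;> simp

lemma covF_resample_flip (i m : ℕ) :
    covF pi7 P0k P1k (fun x : ℤ => (x : ℝ)) i m =
      if m = 0 then 1 else if m = 1 ∧ Odd i then -1 else 0 := by
  rw [covF, opSeqF_resample_flip]
  split_ifs <;> norm_num [integral_pi7]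

lemma sum_covF_resample_flip (k : ℕ) :
    ∑ i ∈ Finset.range (k + 1), covF pi7 P0k P1k (fun x : ℤ => (x : ℝ)) i (k + 1 - i) =
      if Odd k then -1 else 0 := by
  rw [Finset.sum_eq_single_of_mem k (Finset.self_mem_range_succ k) fun i hi hik => ?_]
  · simp [covF_resample_flip]
  · have : 2 ≤ k + 1 - i := by have := Finset.mem_range.mp hi; omega
    rw [covF_resample_flip, if_neg (by omega), if_neg (by omega)]

lemma varF_resample_flip_succ (k : ℕ) :
    varF pi7 P0k P1k (fun x : ℤ => (x : ℝ)) (k + 1) = if Even k then 1 else 2 := by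
  induction k with
  | zero => simp [varF, covF_resample_flip]
  | succ k ih =>
    rw [varF_succ, ih, sum_covF_resample_flip, covF_resample_flip]
    rcases Nat.even_or_odd k with hk | hk
    · norm_num [hk, Nat.not_even_iff_odd.mpr hk.add_one, Nat.not_odd_iff_even.mpr hk]
    · norm_num [hk, hk.add_one, Nat.not_even_iff_odd.mpr hk]

lemma abs_varF_resample_flip_le (n : ℕ) :
    |varF pi7 P0k P1k (fun x : ℤ => (x : ℝ)) n| ≤ 2 := by
  cases n with
  | zero => simp [varF]
  | succ k => rw [varF_resample_flip_succ]; split_ifs <;> norm_num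

/-- Counterexample (Remark 3): for `X = {-1,1}`, `π` uniform, `P₀(x,·) = π`,
`P₁(x,·) = δ_{-x}`, `Q₀ = Q₁ = P₁` and `f = id`, the asymptotic variances of the two
alternating chains exist and satisfy `v₁(f) ≤ v₀(f)`, yet the autocovariance series of
chain 1 is not absolutely summable: condition (5) is not necessary for (6). -/
theorem stmt7 :
    (∃ v0 v1 : ℝ,
      Tendsto (fun n : ℕ => varF pi7 P0k P1k (fun x : ℤ => (x : ℝ)) n / n) atTop (𝓝 v0) ∧
      Tendsto (fun n : ℕ => varF pi7 P1k P1k (fun x : ℤ => (x : ℝ)) n / n) atTop (𝓝 v1) ∧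
      v1 ≤ v0) ∧
    ¬ Summable (fun k : ℕ => |covF pi7 P1k P1k (fun x : ℤ => (x : ℝ)) 0 (k + 1)|) := by
  refine ⟨⟨0, 0, tendsto_div_natCast_nhds_zero_of_abs_le abs_varF_resample_flip_le,
    tendsto_div_natCast_nhds_zero_of_abs_le abs_varF_flip_le, le_rfl⟩, ?_⟩
  simp [covF_flip, summable_const_iff]
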